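/- With $\mathrm{GL}(l,k)_2$ as above and source/target maps $t_{20}(d, M) = d$ and $s_{20}(d, \begin{pmatrix} A & JB \\ 0 & B \end{pmatrix}) = ((I_k + dJ)B)^{-1} d A$, the source of a product equals the source of the second factor: if $(d, M)$ and $(d', M')$ are composable (i.e. $d' = s_{20}(d,M)$), then $s_{20}((d,M) \cdot (d',M')) = s_{20}(d', M')$. -/
import Mathlib


/-- For composable arrows of `GL(l,k)₂`, the matrix `I_k + d*(A*J'*B⁻¹ + J)` of
the product is invertible, and the source of the product equals the source of
the second factor: `s₂₀((d,M)·(d',M')) = s₂₀(d',M')`. -/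
theorem stmt5 (l k : ℕ)
    (d : Matrix (Fin k) (Fin l) ℝ)
    (A A' : Matrix (Fin l) (Fin l) ℝ) (B B' : Matrix (Fin k) (Fin k) ℝ)
    (J J' : Matrix (Fin l) (Fin k) ℝ)
    (hA : IsUnit A) (hA' : IsUnit A') (hB : IsUnit B) (hB' : IsUnit B')
    (h1 : IsUnit (1 + J * d)) (h2 : IsUnit (1 + d * J))
    (d' : Matrix (Fin k) (Fin l) ℝ) (hd' : d' = ((1 + d * J) * B)⁻¹ * d * A)
    (h1' : IsUnit (1 + J' * d')) (h2' : IsUnit (1 + d' * J')) :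
    IsUnit (1 + d * (A * J' * B⁻¹ + J)) ∧
    ((1 + d * (A * J' * B⁻¹ + J)) * (B * B'))⁻¹ * d * (A * A') =
      ((1 + d' * J') * B')⁻¹ * d' * A' := by
  have hBdet : IsUnit B.det := (Matrix.isUnit_iff_isUnit_det B).mp hB
  have hUdet : IsUnit ((1 + d * J) * B).det :=
    (Matrix.isUnit_iff_isUnit_det _).mp (h2.mul hB)
  -- key: (1+dJ)B * d' = d*A
  have hkey : (1 + d * J) * B * d' = d * A := by
    rw [hd', ← Matrix.mul_assoc, ← Matrix.mul_assoc,
      Matrix.mul_nonsing_inv _ hUdet, Matrix.one_mul]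
  -- factorization of the matrix
  have hX : 1 + d * (A * J' * B⁻¹ + J)
      = (1 + d * J) * B * (1 + d' * J') * B⁻¹ := by
    have h : (1 + d * J) * B * (1 + d' * J') = (1 + d * J) * B + d * A * J' := by
      rw [Matrix.mul_add, Matrix.mul_one, ← Matrix.mul_assoc, hkey]
    rw [h, Matrix.add_mul, Matrix.mul_assoc (1 + d * J) B B⁻¹,
      Matrix.mul_nonsing_inv _ hBdet, Matrix.mul_one]
    simp only [Matrix.mul_add, Matrix.mul_assoc]
    abel
  have hBinv : IsUnit (B⁻¹ : Matrix (Fin k) (Fin k) ℝ) :=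
    ⟨⟨B⁻¹, B, Matrix.nonsing_inv_mul B hBdet, Matrix.mul_nonsing_inv B hBdet⟩, rfl⟩
  have hXU : IsUnit (1 + d * (A * J' * B⁻¹ + J)) := by
    rw [hX]; exact ((h2.mul hB).mul h2').mul hBinv
  refine ⟨hXU, ?_⟩
  have hprod : (1 + d * (A * J' * B⁻¹ + J)) * (B * B')
      = (1 + d * J) * B * ((1 + d' * J') * B') := by
    rw [hX, mul_assoc, ← mul_assoc (B⁻¹) B B', Matrix.nonsing_inv_mul B hBdet,
      one_mul, mul_assoc, mul_assoc]
  have hd'' : d' = B⁻¹ * (1 + d * J)⁻¹ * d * A := by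
    rw [hd', Matrix.mul_inv_rev]
  rw [hprod, Matrix.mul_inv_rev, Matrix.mul_inv_rev ((1 + d' * J')) B',
    Matrix.mul_inv_rev, hd'']
  simp only [Matrix.mul_assoc]
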